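/- arXiv:math/0609566 — 4 statements merged into one kernel-verified Lean document; each statement's English description precedes it below -/
import Mathlib

section
/- Let τ be the first positive solution of tan(τ) = τ. For a > 0, the Jacobian determinant of the endpoint map E(a,t) = ((1/a) sin(at), t/(2a) − sin(2at)/(4a²)) of Grushin geodesics from the origin vanishes at t = τ/a; i.e., ∂(x,y)/∂(a,t) evaluated at (a, τ/a) is zero, so the first conjugate time along the geodesic with parameter a is τ/a. -/
/-!
Both components of the column `∂E/∂a` of the Jacobian are multiples of `sin(at) - at cos(at)`,
which vanishes at `at = τ` because `tan τ = τ`. So `(1, 0)` lies in the kernel of the Jacobian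
at `(a, τ/a)`, and its determinant is zero.
-/

open Real

theorem ContinuousLinearMap.det_eq_zero_of_apply_eq_zero {R M : Type*} [CommRing R] [IsDomain R]
    [TopologicalSpace M] [AddCommGroup M] [Module R M] [Module.Free R M] [Module.Finite R M]
    (f : M →L[R] M) {v : M} (hv : v ≠ 0) (hfv : f v = 0) : f.det = 0 :=
  LinearMap.det_eq_zero_iff_ker_ne_bot.mpr <| (Submodule.ne_bot_iff _).mpr ⟨v, hfv, hv⟩

theorem HasFDerivAt.hasDerivAt_comp_prodMk_left {𝕜 F G : Type*} [NontriviallyNormedField 𝕜]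
    [NormedAddCommGroup F] [NormedSpace 𝕜 F] [NormedAddCommGroup G] [NormedSpace 𝕜 G]
    {f : 𝕜 × F → G} {f' : 𝕜 × F →L[𝕜] G} {x : 𝕜} {y : F} (hf : HasFDerivAt f f' (x, y)) :
    HasDerivAt (fun s => f (s, y)) (f' (1, 0)) x :=
  hf.comp_hasDerivAt x ((hasDerivAt_id x).prodMk (hasDerivAt_const x y))

theorem Real.sin_eq_mul_cos_of_tan_eq_self {x : ℝ} (h : tan x = x) : sin x = x * cos x := by
  rcases eq_or_ne (cos x) 0 with hcos | hcos
  · -- `tan x = sin x / 0 = 0`, so `x = 0`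
    have hx : x = 0 := by rw [← h, tan_eq_sin_div_cos, hcos, div_zero]
    simp [hx]
  · rwa [tan_eq_sin_div_cos, div_eq_iff hcos] at h

noncomputable def grushinEndpoint (p : ℝ × ℝ) : ℝ × ℝ :=
  (sin (p.1 * p.2) / p.1, p.2 / (2 * p.1) - sin (2 * p.1 * p.2) / (4 * p.1 ^ 2))

theorem differentiableAt_grushinEndpoint {p : ℝ × ℝ} (hp : p.1 ≠ 0) :
    DifferentiableAt ℝ grushinEndpoint p := by
  unfold grushinEndpoint
  fun_prop (disch := simp [hp])

theorem hasDerivAt_grushinEndpoint_left {a : ℝ} (ha : a ≠ 0) (t : ℝ) :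
    HasDerivAt (fun s => grushinEndpoint (s, t))
      ((a * t * cos (a * t) - sin (a * t)) / a ^ 2,
        cos (a * t) * (sin (a * t) - a * t * cos (a * t)) / a ^ 3) a := by
  have hx : HasDerivAt (fun s => sin (s * t) / s) ((cos (a * t) * t * a - sin (a * t)) / a ^ 2) a :=
    (((hasDerivAt_id a).mul_const t).sin.div (hasDerivAt_id a) ha).congr_deriv (by simp)
  have hy := ((hasDerivAt_const a t).div ((hasDerivAt_id a).const_mul 2) (by simpa)).sub
    ((((hasDerivAt_id a).const_mul 2).mul_const t).sin.div ((hasDerivAt_pow 2 a).const_mul 4)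
      (by positivity))
  refine (hx.prodMk hy).congr_deriv (Prod.ext (by ring) ?_)
  simp only [id, show 2 * a * t = 2 * (a * t) by ring, sin_two_mul, cos_two_mul]
  field_simp
  ring

theorem stmt5_general (τ : ℝ) (htan : Real.tan τ = τ)
    (a : ℝ) (ha : 0 < a) :
    (fderiv ℝ (fun p : ℝ × ℝ =>
        ((Real.sin (p.1 * p.2) / p.1 : ℝ),
          (p.2 / (2 * p.1) - Real.sin (2 * p.1 * p.2) / (4 * p.1 ^ 2) : ℝ)))
      (a, τ / a)).det = 0 := by
  change (fderiv ℝ grushinEndpoint (a, τ / a)).det = 0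
  refine (fderiv ℝ grushinEndpoint (a, τ / a)).det_eq_zero_of_apply_eq_zero
    (v := (1, 0)) (by simp) ?_
  have hpartial := (differentiableAt_grushinEndpoint (p := (a, τ / a)) ha.ne').hasFDerivAt
    |>.hasDerivAt_comp_prodMk_left
  rw [hpartial.unique (hasDerivAt_grushinEndpoint_left ha.ne' (τ / a)),
    mul_div_cancel₀ _ ha.ne', sin_eq_mul_cos_of_tan_eq_self htan]
  simp

/-- Let τ be the first positive root of tan τ = τ. The Jacobian determinant of
the Grushin endpoint map E(a,t) = ((1/a) sin(at), t/(2a) − sin(2at)/(4a²))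
vanishes at (a, τ/a) for every a > 0: the first conjugate time is τ/a. -/
theorem stmt5 (τ : ℝ) (hτ : 0 < τ) (htan : Real.tan τ = τ)
    (hfirst : ∀ s : ℝ, 0 < s → s < τ → Real.tan s ≠ s)
    (a : ℝ) (ha : 0 < a) :
    (fderiv ℝ (fun p : ℝ × ℝ =>
        ((Real.sin (p.1 * p.2) / p.1 : ℝ),
          (p.2 / (2 * p.1) - Real.sin (2 * p.1 * p.2) / (4 * p.1 ^ 2) : ℝ)))
      (a, τ / a)).det = 0 :=
  stmt5_general τ htan a ha
end

section
/- The Grushin conjugate points E(a, τ/a) = ((1/a) sin τ, (τ/a − sin(2τ)/(2a))/(2a)) for a > 0, where τ is the first positive root of tan τ = τ, lie on the parabola y = (x²/2)·(1/(cos τ sin τ) − 1/τ). -/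
/-- The Grushin conjugate points E(a, τ/a), a > 0, with τ ∈ (π, 3π/2) the root
of tan τ = τ, lie on the parabola y = (x²/2)(1/(cos τ sin τ) − 1/τ). -/
theorem stmt6 (τ : ℝ) (hτ1 : Real.pi < τ) (hτ2 : τ < 3 * Real.pi / 2)
    (htan : Real.tan τ = τ) (a : ℝ) (ha : 0 < a) :
    (τ / a) / (2 * a) - Real.sin (2 * a * (τ / a)) / (4 * a ^ 2)
      = (((1 / a) * Real.sin (a * (τ / a))) ^ 2 / 2)
          * (1 / (Real.cos τ * Real.sin τ) - 1 / τ) := by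
  have hτ0 : 0 < τ := lt_trans Real.pi_pos hτ1
  have hcos : Real.cos τ < 0 := by
    apply Real.cos_neg_of_pi_div_two_lt_of_lt
    · linarith [Real.pi_pos]
    · linarith
  have hcos' : Real.cos τ ≠ 0 := ne_of_lt hcos
  have hsin : Real.sin τ = τ * Real.cos τ := by
    have := Real.tan_eq_sin_div_cos τ
    rw [htan] at this
    field_simp at this
    linarith [this]
  have hsin' : Real.sin τ ≠ 0 := by
    rw [hsin]
    exact ne_of_lt (mul_neg_of_pos_of_neg hτ0 hcos)
  have h1 : a * (τ / a) = τ := by field_simp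
  have h2 : 2 * a * (τ / a) = 2 * τ := by field_simp
  rw [h1, h2, Real.sin_two_mul, hsin]
  have ha' : a ≠ 0 := ne_of_gt ha
  field_simp
  ring
end

section
/- For the Grushin-type normal form X = (1,0), Y = (0, x e^{φ(x,y)}) with φ(0,y) = 0, the sum of the geodesic curvature integrals over the two vertical segments {ε}×[−b,b] and {−ε}×[−b,b] (with boundary orientations induced by M⁺ = {x>0} and M⁻ = {x<0} respectively) satisfies ∫_{∂M⁺_ε} k_g ds − ∫_{∂M⁻_ε} k_g ds = (1/ε²)∫_{−b}^{b} (F(ε,y) − F(−ε,y)) dy = O(ε) as ε → 0⁺, where F(ε,y) = (1 + ε∂ₓφ(ε,y)) e^{−φ(ε,y)}. -/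
open Real intervalIntegral Set

noncomputable def pd (f : ℝ × ℝ → ℝ) : ℝ × ℝ → ℝ := fun p => fderiv ℝ f p (1, 0)

lemma pd_contDiff {f : ℝ × ℝ → ℝ} (hf : ContDiff ℝ (⊤ : ℕ∞) f) : ContDiff ℝ (⊤ : ℕ∞) (pd f) :=
  (hf.fderiv_right (by simp)).clm_apply contDiff_const

lemma pd_hasDerivAt {f : ℝ × ℝ → ℝ} (hf : ContDiff ℝ (⊤ : ℕ∞) f) (x y : ℝ) :
    HasDerivAt (fun x => f (x, y)) (pd f (x, y)) x := by
  have h1 : HasDerivAt (fun t : ℝ => (t, y)) ((1 : ℝ), (0 : ℝ)) x :=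
    (hasDerivAt_id x).prodMk (hasDerivAt_const x y)
  exact (hf.differentiable (by simp) (x, y)).hasFDerivAt.comp_hasDerivAt x h1

/-- Grushin normal form boundary terms: with φ smooth, φ(0,·) ≡ 0, and
F(ε,y) = (1 + ε∂ₓφ(ε,y))e^{−φ(ε,y)}, the difference of geodesic-curvature
integrals over the vertical segments {±ε}×[−b,b] equals
ε⁻² ∫_{−b}^b (F(ε,y) − F(−ε,y)) dy, and is O(ε) as ε → 0⁺. -/
theorem stmt11 (φ : ℝ × ℝ → ℝ) (hφ : ContDiff ℝ (⊤ : ℕ∞) φ)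
    (h0 : ∀ y : ℝ, φ (0, y) = 0) (b : ℝ) (hb : 0 < b) :
    (∀ ε : ℝ, 0 < ε →
      (∫ y in (-b)..b,
          (1 / ε + deriv (fun x : ℝ => φ (x, y)) ε) / (ε * Real.exp (φ (ε, y))))
        - (∫ y in (-b)..b,
            (1 / ε - deriv (fun x : ℝ => φ (x, y)) (-ε)) / (ε * Real.exp (φ (-ε, y))))
      = (1 / ε ^ 2) * ∫ y in (-b)..b,
          ((1 + ε * deriv (fun x : ℝ => φ (x, y)) ε) * Real.exp (-φ (ε, y))
            - (1 + (-ε) * deriv (fun x : ℝ => φ (x, y)) (-ε)) * Real.exp (-φ (-ε, y)))) ∧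
    ∃ C > (0 : ℝ), ∃ δ > (0 : ℝ), ∀ ε : ℝ, 0 < ε → ε < δ →
      |(∫ y in (-b)..b,
          (1 / ε + deriv (fun x : ℝ => φ (x, y)) ε) / (ε * Real.exp (φ (ε, y))))
        - ∫ y in (-b)..b,
            (1 / ε - deriv (fun x : ℝ => φ (x, y)) (-ε)) / (ε * Real.exp (φ (-ε, y)))|
        ≤ C * ε := by
  set G : ℝ × ℝ → ℝ := fun p => (1 + p.1 * pd φ p) * Real.exp (-φ p) with hGdef
  have hG : ContDiff ℝ (⊤ : ℕ∞) G :=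
    (contDiff_const.add (contDiff_fst.mul (pd_contDiff hφ))).mul (Real.contDiff_exp.comp hφ.neg)
  have hG1c : ContDiff ℝ (⊤ : ℕ∞) (pd G) := pd_contDiff hG
  have hG2c : ContDiff ℝ (⊤ : ℕ∞) (pd (pd G)) := pd_contDiff hG1c
  have hG3c : ContDiff ℝ (⊤ : ℕ∞) (pd (pd (pd G))) := pd_contDiff hG2c
  have hder : ∀ (ε y : ℝ), deriv (fun x : ℝ => φ (x, y)) ε = pd φ (ε, y) :=
    fun ε y => (pd_hasDerivAt hφ ε y).deriv
  -- pd G (0, y) = 0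
  have hG1zero : ∀ y : ℝ, pd G (0, y) = 0 := by
    intro y
    have hφd : HasDerivAt (fun x => φ (x, y)) (pd φ (0, y)) 0 := pd_hasDerivAt hφ 0 y
    have hpd : HasDerivAt (fun x => pd φ (x, y)) (pd (pd φ) (0, y)) 0 :=
      pd_hasDerivAt (pd_contDiff hφ) 0 y
    have hA : HasDerivAt (fun x : ℝ => 1 + x * pd φ (x, y))
        (0 + (1 * pd φ (0, y) + 0 * pd (pd φ) (0, y))) 0 :=
      (hasDerivAt_const 0 (1:ℝ)).add ((hasDerivAt_id 0).mul hpd)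
    have hB : HasDerivAt (fun x : ℝ => Real.exp (-φ (x, y)))
        (Real.exp (-φ (0, y)) * (-pd φ (0, y))) 0 := (hφd.neg).exp
    have htot := hA.mul hB
    have h2 : HasDerivAt (fun x => G (x, y)) (pd G (0, y)) 0 := pd_hasDerivAt hG 0 y
    have huniq := h2.unique htot
    rw [huniq]
    simp [h0 y]
  have hGcont : Continuous G := hG.continuous
  have hGy : ∀ t : ℝ, Continuous fun y : ℝ => G (t, y) :=
    fun t => hGcont.comp (continuous_const.prodMk continuous_id)
  -- master identity
  have hmaster : ∀ ε : ℝ, 0 < ε →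
      (∫ y in (-b)..b,
          (1 / ε + deriv (fun x : ℝ => φ (x, y)) ε) / (ε * Real.exp (φ (ε, y))))
        - (∫ y in (-b)..b,
            (1 / ε - deriv (fun x : ℝ => φ (x, y)) (-ε)) / (ε * Real.exp (φ (-ε, y))))
      = (1 / ε ^ 2) * ∫ y in (-b)..b, (G (ε, y) - G (-ε, y)) := by
    intro ε hε
    have hne : ε ≠ 0 := ne_of_gt hε
    have e1 : (∫ y in (-b)..b,
        (1 / ε + deriv (fun x : ℝ => φ (x, y)) ε) / (ε * Real.exp (φ (ε, y))))
        = ∫ y in (-b)..b, (1 / ε ^ 2) * G (ε, y) := by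
      refine intervalIntegral.integral_congr fun y _ => ?_
      rw [hder]
      simp only [hGdef]
      rw [Real.exp_neg]
      field_simp
    have e2 : (∫ y in (-b)..b,
        (1 / ε - deriv (fun x : ℝ => φ (x, y)) (-ε)) / (ε * Real.exp (φ (-ε, y))))
        = ∫ y in (-b)..b, (1 / ε ^ 2) * G (-ε, y) := by
      refine intervalIntegral.integral_congr fun y _ => ?_
      rw [hder]
      simp only [hGdef]
      rw [Real.exp_neg]
      field_simp
      ring
    rw [e1, e2, intervalIntegral.integral_const_mul, intervalIntegral.integral_const_mul,
      ← mul_sub, ← intervalIntegral.integral_sub ((hGy ε).intervalIntegrable _ _)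
        ((hGy (-ε)).intervalIntegrable _ _)]
  constructor
  · intro ε hε
    rw [hmaster ε hε]
    congr 1
    refine intervalIntegral.integral_congr fun y _ => ?_
    rw [hder, hder]
  · -- bound on third derivative
    have hK : IsCompact ((Icc (-1:ℝ) 1) ×ˢ (Icc (-b) b)) :=
      (isCompact_Icc).prod isCompact_Icc
    obtain ⟨M, hM⟩ := hK.exists_bound_of_continuousOn hG3c.continuous.continuousOn
    have hM0 : 0 ≤ M := by
      have h00 : ((0:ℝ), (0:ℝ)) ∈ (Icc (-1:ℝ) 1) ×ˢ (Icc (-b) b) := by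
        constructor
        · constructor <;> norm_num
        · constructor <;> simp <;> linarith
      have := hM (0, 0) h00
      exact le_trans (norm_nonneg _) this
    refine ⟨2 * b * M + 1, by nlinarith, 1, one_pos, ?_⟩
    intro ε hε hε1
    rw [hmaster ε hε]
    have hpoint : ∀ y ∈ Set.uIoc (-b) b, ‖G (ε, y) - G (-ε, y)‖ ≤ M * ε ^ 3 := by
      intro y hyI
      have hy : y ∈ Icc (-b) b := by
        rw [Set.uIoc_of_le (by linarith : (-b:ℝ) ≤ b)] at hyI
        exact Ioc_subset_Icc_self hyI
      -- Lipschitz bound on second derivative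
      have g2lip : ∀ t ∈ Icc (-1:ℝ) 1, |pd (pd G) (t, y) - pd (pd G) (0, y)| ≤ M * |t| := by
        intro t ht
        have := Convex.norm_image_sub_le_of_norm_hasDerivWithin_le
          (f := fun s => pd (pd G) (s, y)) (f' := fun s => pd (pd (pd G)) (s, y))
          (C := M) (s := Icc (-1:ℝ) 1)
          (fun s hs => (pd_hasDerivAt hG2c s y).hasDerivWithinAt)
          (fun s hs => hM (s, y) ⟨hs, hy⟩) (convex_Icc _ _)
          (⟨by norm_num, by norm_num⟩ : (0:ℝ) ∈ Icc (-1:ℝ) 1) ht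
        simpa [Real.norm_eq_abs] using this
      -- first FTC step: bound u t = G1(t,y)+G1(-t,y)
      have hu' : ∀ t : ℝ, HasDerivAt (fun s => pd G (s, y) + pd G (-s, y))
          (pd (pd G) (t, y) + pd (pd G) (-t, y) * (-1)) t := by
        intro t
        exact (pd_hasDerivAt hG1c t y).add
          (HasDerivAt.comp t (pd_hasDerivAt hG1c (-t) y) (hasDerivAt_neg t))
      have hu'cont : Continuous fun t : ℝ =>
          pd (pd G) (t, y) + pd (pd G) (-t, y) * (-1) := by
        have c1 : Continuous fun t : ℝ => pd (pd G) (t, y) :=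
          hG2c.continuous.comp (continuous_id.prodMk continuous_const)
        exact (c1.add ((c1.comp continuous_neg).mul continuous_const))
      have hucont : Continuous fun t : ℝ => pd G (t, y) + pd G (-t, y) := by
        have c1 : Continuous fun t : ℝ => pd G (t, y) :=
          hG1c.continuous.comp (continuous_id.prodMk continuous_const)
        exact c1.add (c1.comp continuous_neg)
      have hubound : ∀ t ∈ Icc (0:ℝ) 1, |pd G (t, y) + pd G (-t, y)| ≤ M * t ^ 2 := by
        intro t ht
        have hftc : (∫ s in (0:ℝ)..t, (pd (pd G) (s, y) + pd (pd G) (-s, y) * (-1)))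
            = (pd G (t, y) + pd G (-t, y)) - (pd G (0, y) + pd G (-0, y)) :=
          intervalIntegral.integral_eq_sub_of_hasDerivAt (fun s _ => hu' s)
            (hu'cont.intervalIntegrable _ _)
        have hzero : pd G (0, y) + pd G (-0, y) = 0 := by
          rw [neg_zero, hG1zero y]; ring
        rw [hzero, sub_zero] at hftc
        rw [← hftc]
        have hb1 : ‖∫ s in (0:ℝ)..t, (pd (pd G) (s, y) + pd (pd G) (-s, y) * (-1))‖
            ≤ |∫ s in (0:ℝ)..t, 2 * M * s| := by
          refine intervalIntegral.norm_integral_le_abs_of_norm_le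
            (g := fun s => 2 * M * s) ?_
            ((continuous_const.mul continuous_id).intervalIntegrable _ _)
          refine ((MeasureTheory.ae_restrict_mem measurableSet_uIoc).mono fun s hs => ?_)
          rw [Set.uIoc_of_le ht.1] at hs
          have hs1 : s ∈ Icc (-1:ℝ) 1 := ⟨by nlinarith [hs.1, hs.2, ht.2], le_trans hs.2 ht.2⟩
          have hs1' : -s ∈ Icc (-1:ℝ) 1 := ⟨by linarith [hs1.2], by linarith [hs1.1]⟩
          have b1 := g2lip s hs1
          have b2 := g2lip (-s) hs1'
          have hs0 : 0 < s := hs.1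
          rw [Real.norm_eq_abs]
          have : pd (pd G) (s, y) + pd (pd G) (-s, y) * (-1)
              = (pd (pd G) (s, y) - pd (pd G) (0, y))
                - (pd (pd G) (-s, y) - pd (pd G) (0, y)) := by ring
          rw [this]
          calc |(pd (pd G) (s, y) - pd (pd G) (0, y))
                - (pd (pd G) (-s, y) - pd (pd G) (0, y))|
              ≤ |pd (pd G) (s, y) - pd (pd G) (0, y)|
                + |pd (pd G) (-s, y) - pd (pd G) (0, y)| := abs_sub _ _
            _ ≤ M * |s| + M * |(-s)| := add_le_add b1 b2
            _ = 2 * M * s := by rw [abs_neg, abs_of_pos hs0]; ring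
        have hval : (∫ s in (0:ℝ)..t, 2 * M * s) = M * t ^ 2 := by
          rw [intervalIntegral.integral_const_mul, integral_id]
          ring
        rw [hval] at hb1
        have : |M * t ^ 2| = M * t ^ 2 := abs_of_nonneg (by positivity)
        rw [this] at hb1
        simpa [Real.norm_eq_abs] using hb1
      -- second FTC step
      have hh' : ∀ t : ℝ, HasDerivAt (fun s => G (s, y) - G (-s, y))
          (pd G (t, y) + pd G (-t, y)) t := by
        intro t
        have h1 := (pd_hasDerivAt hG t y).sub
          (HasDerivAt.comp t (pd_hasDerivAt hG (-t) y) (hasDerivAt_neg t))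
        have h2 : pd G (t, y) + pd G (-t, y) = pd G (t, y) - pd G (-t, y) * (-1) := by ring
        rw [h2]
        exact h1
      have hftc2 : (∫ s in (0:ℝ)..ε, (pd G (s, y) + pd G (-s, y)))
          = (G (ε, y) - G (-ε, y)) - (G (0, y) - G (-0, y)) :=
        intervalIntegral.integral_eq_sub_of_hasDerivAt (fun s _ => hh' s)
          (hucont.intervalIntegrable _ _)
      have hzero2 : G (0, y) - G (-0, y) = 0 := by rw [neg_zero]; ring
      rw [hzero2, sub_zero] at hftc2
      rw [← hftc2]
      have hb2 : ‖∫ s in (0:ℝ)..ε, (pd G (s, y) + pd G (-s, y))‖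
          ≤ |∫ s in (0:ℝ)..ε, M * s ^ 2| := by
        refine intervalIntegral.norm_integral_le_abs_of_norm_le
          (g := fun s => M * s ^ 2) ?_
          ((continuous_const.mul (continuous_pow 2)).intervalIntegrable _ _)
        refine ((MeasureTheory.ae_restrict_mem measurableSet_uIoc).mono fun s hs => ?_)
        rw [Set.uIoc_of_le (le_of_lt hε)] at hs
        have : s ∈ Icc (0:ℝ) 1 := ⟨le_of_lt hs.1, le_trans hs.2 (le_of_lt hε1)⟩
        simpa [Real.norm_eq_abs] using hubound s this
      have hval2 : (∫ s in (0:ℝ)..ε, M * s ^ 2) = M * (ε ^ 3 / 3) := by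
        rw [intervalIntegral.integral_const_mul, integral_pow]
        norm_num
      rw [hval2] at hb2
      have habs : |M * (ε ^ 3 / 3)| = M * (ε ^ 3 / 3) := abs_of_nonneg (by positivity)
      rw [habs] at hb2
      calc ‖∫ s in (0:ℝ)..ε, (pd G (s, y) + pd G (-s, y))‖
          ≤ M * (ε ^ 3 / 3) := hb2
        _ ≤ M * ε ^ 3 := by nlinarith [pow_pos hε 3]
    have hint : ‖∫ y in (-b)..b, (G (ε, y) - G (-ε, y))‖ ≤ M * ε ^ 3 * |b - (-b)| :=
      intervalIntegral.norm_integral_le_of_norm_le_const hpoint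
    have h2b : |b - (-b)| = 2 * b := by rw [abs_of_pos (by linarith)]; ring
    rw [h2b] at hint
    rw [abs_mul]
    have h1 : |1 / ε ^ 2| = 1 / ε ^ 2 := abs_of_pos (by positivity)
    rw [h1]
    calc (1 / ε ^ 2) * |∫ y in (-b)..b, (G (ε, y) - G (-ε, y))|
        ≤ (1 / ε ^ 2) * (M * ε ^ 3 * (2 * b)) := by
          apply mul_le_mul_of_nonneg_left _ (by positivity)
          simpa [Real.norm_eq_abs] using hint
      _ = 2 * b * M * ε := by field_simp
      _ ≤ (2 * b * M + 1) * ε := by nlinarith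
end

section
/- For the trivializable 2-ARS on the torus T² = [−π,π]² (standard identifications) with orthonormal frame X = (1,0), Y = (0, 1 − cos x), the integral ∫_{T²∖Z} K dA diverges to −∞, where Z = {x = 0}, K = (cos x − 2)/(2 sin²(x/2)) and dA = (1 − cos x)⁻¹ dx dy. -/
/-!
The density `K · (1 - cos x)⁻¹` has the explicit primitive `(3/2) t + t³/6` with `t = cot (x/2)`,
which vanishes at `x = π`. Hence `∫_δ^π` equals minus its value at `δ`, and `cot (δ/2) → +∞`
as `δ → 0⁺`.
-/

open Filter Topology Real

lemma one_sub_cos_eq_two_mul_sin_half_sq (x : ℝ) : 1 - cos x = 2 * sin (x / 2) ^ 2 := by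
  have h := sin_sq_eq_half_sub (x / 2)
  rw [mul_div_cancel₀ x two_ne_zero] at h
  linarith

lemma sin_half_pos {x : ℝ} (h₀ : 0 < x) (h : x < 2 * π) : 0 < sin (x / 2) :=
  sin_pos_of_pos_of_lt_pi (by linarith) (by linarith)

lemma hasDerivAt_cot {x : ℝ} (hx : sin x ≠ 0) : HasDerivAt cot (-1 / sin x ^ 2) x := by
  rw [show cot = fun y => cos y / sin y from funext cot_eq_cos_div_sin]
  refine ((hasDerivAt_cos x).div (hasDerivAt_sin x) hx).congr_deriv ?_
  rw [show -sin x * sin x - cos x * cos x = -1 by linear_combination -sin_sq_add_cos_sq x]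

lemma tendsto_cot_nhdsGT_zero : Tendsto cot (𝓝[>] 0) atTop := by
  have hcos : Tendsto cos (𝓝[>] 0) (𝓝 1) :=
    (continuous_cos.tendsto' 0 1 cos_zero).mono_left nhdsWithin_le_nhds
  have hsin : Tendsto sin (𝓝[>] 0) (𝓝[>] 0) := by
    refine tendsto_nhdsWithin_of_tendsto_nhds_of_eventually_within _ ?_ ?_
    · exact (continuous_sin.tendsto' 0 0 sin_zero).mono_left nhdsWithin_le_nhds
    · filter_upwards [Ioo_mem_nhdsGT pi_pos] with x hx
      exact sin_pos_of_pos_of_lt_pi hx.1 hx.2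
  have hcot : cot = fun x => cos x * (sin x)⁻¹ := funext fun x => by
    rw [cot_eq_cos_div_sin, div_eq_mul_inv]
  rw [hcot]
  exact hcos.pos_mul_atTop one_pos hsin.inv_tendsto_nhdsGT_zero

lemma tendsto_half_nhdsGT_zero : Tendsto (fun δ : ℝ => δ / 2) (𝓝[>] 0) (𝓝[>] 0) := by
  refine tendsto_nhdsWithin_of_tendsto_nhds_of_eventually_within _ ?_ ?_
  · exact ((continuous_id.div_const 2).tendsto' 0 0 (zero_div 2)).mono_left nhdsWithin_le_nhds
  · filter_upwards [self_mem_nhdsWithin] with δ hδ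
    exact half_pos hδ.out

/-- `K · (1 - cos x)⁻¹` with `K = (cos x - 2) / (2 sin² (x/2))`: the `x`-integrand of `K dA`. -/
noncomputable def curvatureDensity (x : ℝ) : ℝ :=
  (cos x - 2) / (2 * sin (x / 2) ^ 2 * (1 - cos x))

noncomputable def curvaturePrimitive (x : ℝ) : ℝ :=
  3 / 2 * cot (x / 2) + cot (x / 2) ^ 3 / 6

lemma curvaturePrimitive_pi : curvaturePrimitive π = 0 := by
  simp [curvaturePrimitive, cot_eq_cos_div_sin]

lemma hasDerivAt_curvaturePrimitive {x : ℝ} (hx : sin (x / 2) ≠ 0) :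
    HasDerivAt curvaturePrimitive (curvatureDensity x) x := by
  have hcot : HasDerivAt (fun y => cot (y / 2)) (-1 / sin (x / 2) ^ 2 * (1 / 2)) x :=
    HasDerivAt.comp (h₂ := cot) x (hasDerivAt_cot hx) ((hasDerivAt_id' x).div_const 2)
  refine ((hcot.const_mul (3 / 2)).add ((hcot.pow 3).div_const 6)).congr_deriv ?_
  have hcos : cos x = 1 - 2 * sin (x / 2) ^ 2 := by
    linarith [one_sub_cos_eq_two_mul_sin_half_sq x]
  rw [curvatureDensity, hcos, cot_eq_cos_div_sin, show 3 - 1 = 2 from rfl, div_pow, cos_sq']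
  field_simp
  ring

lemma integral_curvatureDensity {δ : ℝ} (hδ₀ : 0 < δ) (hδ : δ ≤ π) :
    ∫ x in δ..π, curvatureDensity x = -curvaturePrimitive δ := by
  have hsin : ∀ x ∈ Set.uIcc δ π, sin (x / 2) ≠ 0 := by
    intro x hx
    rw [Set.uIcc_of_le hδ] at hx
    exact (sin_half_pos (hδ₀.trans_le hx.1) (by linarith [hx.2, pi_pos])).ne'
  have hcont : ContinuousOn curvatureDensity (Set.uIcc δ π) := by
    refine ContinuousOn.div (by fun_prop) (by fun_prop) fun x hx => ?_
    have := hsin x hx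
    rw [one_sub_cos_eq_two_mul_sin_half_sq]
    positivity
  rw [intervalIntegral.integral_eq_sub_of_hasDerivAt
      (fun x hx => hasDerivAt_curvaturePrimitive (hsin x hx)) hcont.intervalIntegrable,
    curvaturePrimitive_pi, zero_sub]

lemma tendsto_curvaturePrimitive_nhdsGT_zero : Tendsto curvaturePrimitive (𝓝[>] 0) atTop := by
  have hcot := tendsto_cot_nhdsGT_zero.comp tendsto_half_nhdsGT_zero
  exact (hcot.const_mul_atTop (by norm_num)).atTop_add_atTop
    (((tendsto_pow_atTop three_ne_zero).comp hcot).atTop_div_const (by norm_num : (0 : ℝ) < 6))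

/-- Non-generic counterexample on the torus: for the frame X = (1,0),
Y = (0, 1 − cos x), the integral of K dA diverges to −∞; concretely,
∫_δ^π (cos x − 2)/(2 sin²(x/2)(1 − cos x)) dx → −∞ as δ → 0⁺. -/
theorem stmt12 :
    Tendsto (fun δ : ℝ =>
        ∫ x in δ..Real.pi,
          (Real.cos x - 2) / (2 * (Real.sin (x / 2)) ^ 2 * (1 - Real.cos x)))
      (nhdsWithin 0 (Set.Ioi 0)) atBot := by
  have hint : ∀ᶠ δ in 𝓝[>] 0, -curvaturePrimitive δ = ∫ x in δ..π, curvatureDensity x := by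
    filter_upwards [Ioc_mem_nhdsGT pi_pos] with δ hδ
    exact (integral_curvatureDensity hδ.1 hδ.2).symm
  exact (tendsto_neg_atTop_atBot.comp tendsto_curvaturePrimitive_nhdsGT_zero).congr' hint
end
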